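/- Proposition (Taylor expansion of the symbol of the operator L^k for symplectic ERKN coefficients): Suppose the ERKN coefficients satisfy the symplecticity conditions with d₁ = 1 and let L be the scalar symbol defined below, analytic near z = 0. Then: (i) if a = ω (resp. a = −ω), then L(0) = 0, L'(0) = 2ihω (resp. L'(0) = −2ihω) and L''(0) = 2hω·cot(hω); (ii) for arbitrary real a, L(0) = 4hω·csc(hω)·sin((h/2)(ω + a))·sin((h/2)(ω − a)) and L'(0) = 2ihω·csc(hω)·sin(ha). -/

import Mathlib

/-!
The symplecticity conditions at `x = hω` say that the reflection
`(p, q) ↦ (p cos x + q sin x, p sin x - q cos x)` sends `(b₁, x b̄₁)` to `(cos c₁x, sin c₁x)`,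
so `b₁² + x² b̄₁² = 1`. With this identity the rational expression `L` collapses, wherever the
denominator of `L₁` does not vanish, to `(hω / sin hω) (2 cosh (z + iha) - 2 cos hω)`, and the
Taylor coefficients at `0` are read off from `cosh` and `sinh` at `iha`.
-/

noncomputable section

/-- `sinc x = sin x / x`, with `sinc 0 = 1`. -/
def sinc (x : ℝ) : ℝ := if x = 0 then 1 else Real.sin x / x

/-- the scalar symbol L₁ of the operator L₁^k at frequency ω and phase a = k·ω -/
def symbL1 (h ω a : ℝ) (b1 bb1 : ℝ) (z : ℂ) : ℂ :=
  (Complex.exp (Complex.I * (h * a : ℝ)) * Complex.exp z - (Real.cos (h * ω) : ℂ)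
      - ((h * ω * Real.sin (h * ω) * (bb1 / b1) : ℝ) : ℂ)) /
    (((bb1 / b1 : ℝ) : ℂ) * (Complex.exp (Complex.I * (h * a : ℝ)) * Complex.exp z
        - (Real.cos (h * ω) : ℂ)) + ((sinc (h * ω) : ℝ) : ℂ))

/-- the scalar symbol L₂ of the operator L₂^k -/
def symbL2 (h ω a : ℝ) (c1 b1 bb1 : ℝ) (z : ℂ) : ℂ :=
  ((Real.cos (c1 * h * ω) : ℝ) : ℂ) + ((c1 * sinc (c1 * h * ω) : ℝ) : ℂ) * symbL1 h ω a b1 bb1 z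

/-- the scalar symbol L of the operator L^k -/
def symbL (h ω a : ℝ) (c1 b1 bb1 : ℝ) (z : ℂ) : ℂ :=
  (Complex.exp (Complex.I * (h * a : ℝ)) * Complex.exp z - (Real.cos (h * ω) : ℂ)
      - ((sinc (h * ω) : ℝ) : ℂ) * symbL1 h ω a b1 bb1 z) /
    ((bb1 : ℂ) * symbL2 h ω a c1 b1 bb1 z)

section

open Complex

theorem sq_add_sq_eq_of_reflection {R : Type*} [CommRing R] {c t : R} (h : c ^ 2 + t ^ 2 = 1)
    (p q : R) : (c * p + t * q) ^ 2 + (t * p - c * q) ^ 2 = p ^ 2 + q ^ 2 := by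
  linear_combination (p ^ 2 + q ^ 2) * h

theorem sinc_eq_sin_div {x : ℝ} (hx : x ≠ 0) : sinc x = Real.sin x / x :=
  Real.sinc_of_ne_zero hx

theorem mul_sinc (x : ℝ) : x * sinc x = Real.sin x := by
  rcases eq_or_ne x 0 with rfl | hx
  · simp
  · rw [sinc_eq_sin_div hx, mul_div_cancel₀ _ hx]

theorem symplectic_sq_add_sq {x c1 b1 bb1 : ℝ}
    (hcos : Real.cos x * b1 + x ^ 2 * sinc x * bb1 = Real.cos (c1 * x))
    (hsinc : sinc x * b1 - Real.cos x * bb1 = c1 * sinc (c1 * x)) :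
    b1 ^ 2 + (x * bb1) ^ 2 = 1 := by
  have hu : Real.cos x * b1 + Real.sin x * (x * bb1) = Real.cos (c1 * x) := by
    rw [← hcos, ← mul_sinc]
    ring
  have hv : Real.sin x * b1 - Real.cos x * (x * bb1) = Real.sin (c1 * x) := by
    rw [← mul_sinc, ← mul_sinc]
    linear_combination x * hsinc
  rw [← Real.cos_sq_add_sin_sq (c1 * x), ← hu, ← hv,
    sq_add_sq_eq_of_reflection (Real.cos_sq_add_sin_sq x)]

-- `E = e^{iha} e^z`, `c = cos hω`, `σ = sinc hω`, `X = hω`, `B₁ = b₁`, `B₂ = b̄₁`,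
-- `L₂ = C₂ + S₂ L₁`.
theorem symbL_field_identity {𝕜 : Type*} [Field 𝕜] {E c σ X B1 B2 C2 S2 : 𝕜}
    (hE : E ≠ 0) (hσ : σ ≠ 0) (hB1 : B1 ≠ 0) (hB2 : B2 ≠ 0)
    (hcσ : c ^ 2 + (X * σ) ^ 2 = 1) (hB : B1 ^ 2 + (X * B2) ^ 2 = 1)
    (hC2 : c * B1 + X * (X * σ) * B2 = C2) (hS2 : σ * B1 - c * B2 = S2)
    (hQ : B2 / B1 * (E - c) + σ ≠ 0) :
    (E - c - σ * ((E - c - X * (X * σ) * (B2 / B1)) / (B2 / B1 * (E - c) + σ))) /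
      (B2 * (C2 + S2 * ((E - c - X * (X * σ) * (B2 / B1)) / (B2 / B1 * (E - c) + σ)))) =
    (E + E⁻¹ - 2 * c) / σ := by
  obtain ⟨D, hD_def⟩ : ∃ D, D = B2 * (E - c) + σ * B1 := ⟨_, rfl⟩
  have hQD : B2 / B1 * (E - c) + σ = D / B1 := by
    rw [hD_def]
    field_simp
  have hD : D ≠ 0 := fun h0 => hQ (by rw [hQD, h0, zero_div])
  have hℓ : (E - c - X * (X * σ) * (B2 / B1)) / (B2 / B1 * (E - c) + σ) =
      (B1 * (E - c) - X * (X * σ) * B2) / D := by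
    rw [hQD]
    field_simp
  have hL2 : C2 + S2 * ((B1 * (E - c) - X * (X * σ) * B2) / D) = σ * E / D := by
    field_simp
    rw [hD_def, ← hC2, ← hS2]
    linear_combination (σ * E) * hB
  have hN : E - c - σ * ((B1 * (E - c) - X * (X * σ) * B2) / D) =
      B2 * (E ^ 2 - 2 * c * E + 1) / D := by
    field_simp
    rw [hD_def]
    linear_combination B2 * hcσ
  rw [hℓ, hN, hL2]
  field_simp
  ring

def symbLClosed (h ω a : ℝ) (z : ℂ) : ℂ :=
  ((h * ω * (Real.sin (h * ω))⁻¹ : ℝ) : ℂ) *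
    (2 * Complex.cosh (z + (h * a : ℝ) * Complex.I) - 2 * (Real.cos (h * ω) : ℂ))

theorem symbL_eq_symbLClosed {h ω a c1 b1 bb1 : ℝ} {z : ℂ} (hsin : Real.sin (h * ω) ≠ 0)
    (hb1 : b1 ≠ 0) (hbb1 : bb1 ≠ 0)
    (hcos : Real.cos (h * ω) * b1 + (h * ω) ^ 2 * sinc (h * ω) * bb1 = Real.cos (c1 * (h * ω)))
    (hsinc : sinc (h * ω) * b1 - Real.cos (h * ω) * bb1 = c1 * sinc (c1 * (h * ω)))
    (hden : ((bb1 / b1 : ℝ) : ℂ) * (exp (I * (h * a : ℝ)) * exp z - (Real.cos (h * ω) : ℂ))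
        + ((sinc (h * ω) : ℝ) : ℂ) ≠ 0) :
    symbL h ω a c1 b1 bb1 z = symbLClosed h ω a z := by
  have hx : h * ω ≠ 0 := fun h0 => hsin (by rw [h0, Real.sin_zero])
  have hσ : sinc (h * ω) ≠ 0 := by
    rw [sinc_eq_sin_div hx]
    exact div_ne_zero hsin hx
  have hcσ : Real.cos (h * ω) ^ 2 + (h * ω * sinc (h * ω)) ^ 2 = 1 := by
    rw [mul_sinc, Real.cos_sq_add_sin_sq]
  have hC2 : Real.cos (h * ω) * b1 + h * ω * (h * ω * sinc (h * ω)) * bb1 =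
      Real.cos (c1 * h * ω) := by
    rw [mul_assoc c1, ← hcos]
    ring
  have hS2 : sinc (h * ω) * b1 - Real.cos (h * ω) * bb1 = c1 * sinc (c1 * h * ω) := by
    rw [mul_assoc c1, hsinc]
  have key := symbL_field_identity (E := exp (I * (h * a : ℝ)) * exp z)
    (c := Real.cos (h * ω)) (σ := sinc (h * ω)) (X := (h * ω : ℝ)) (B1 := b1) (B2 := bb1)
    (C2 := Real.cos (c1 * h * ω)) (S2 := (c1 * sinc (c1 * h * ω) : ℝ))
    (mul_ne_zero (exp_ne_zero _) (exp_ne_zero _)) (mod_cast hσ) (mod_cast hb1) (mod_cast hbb1)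
    (mod_cast hcσ) (mod_cast symplectic_sq_add_sq hcos hsinc) (mod_cast hC2) (mod_cast hS2)
    (mod_cast hden)
  calc symbL h ω a c1 b1 bb1 z
      = (exp (I * (h * a : ℝ)) * exp z + (exp (I * (h * a : ℝ)) * exp z)⁻¹
          - 2 * (Real.cos (h * ω) : ℂ)) / (sinc (h * ω) : ℂ) := by
        unfold symbL symbL2 symbL1
        rw [← mul_sinc (h * ω)]
        push_cast at key ⊢
        exact key
    _ = symbLClosed h ω a z := by
        rw [symbLClosed, two_cosh, ← exp_add, ← exp_neg, sinc_eq_sin_div hx,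
          show I * (h * a : ℝ) + z = z + (h * a : ℝ) * I by ring]
        push_cast
        field_simp

theorem symbL_eventuallyEq_symbLClosed {h ω a c1 b1 bb1 : ℝ} (hsin : Real.sin (h * ω) ≠ 0)
    (hb1 : b1 ≠ 0) (hbb1 : bb1 ≠ 0)
    (hcos : Real.cos (h * ω) * b1 + (h * ω) ^ 2 * sinc (h * ω) * bb1 = Real.cos (c1 * (h * ω)))
    (hsinc : sinc (h * ω) * b1 - Real.cos (h * ω) * bb1 = c1 * sinc (c1 * (h * ω)))
    (hden : ((bb1 / b1 : ℝ) : ℂ) * (exp (I * (h * a : ℝ)) - (Real.cos (h * ω) : ℂ))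
        + ((sinc (h * ω) : ℝ) : ℂ) ≠ 0) :
    symbL h ω a c1 b1 bb1 =ᶠ[nhds 0] symbLClosed h ω a := by
  have hcont : Continuous fun z : ℂ => ((bb1 / b1 : ℝ) : ℂ) *
      (exp (I * (h * a : ℝ)) * exp z - (Real.cos (h * ω) : ℂ)) + ((sinc (h * ω) : ℝ) : ℂ) := by
    fun_prop
  have hden_nhds := hcont.continuousAt.eventually_ne (x := 0) (by simpa using hden)
  filter_upwards [hden_nhds] with z hz
  exact symbL_eq_symbLClosed hsin hb1 hbb1 hcos hsinc hz

theorem hasDerivAt_symbLClosed (h ω a : ℝ) (z : ℂ) :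
    HasDerivAt (symbLClosed h ω a)
      (((h * ω * (Real.sin (h * ω))⁻¹ : ℝ) : ℂ) * (2 * sinh (z + (h * a : ℝ) * I))) z :=
  ((((hasDerivAt_cosh _).comp_add_const z _).const_mul 2).sub_const _).const_mul _

theorem symbLClosed_zero (h ω a : ℝ) :
    symbLClosed h ω a 0 = ((4 * h * ω * (Real.sin (h * ω))⁻¹ *
        Real.sin (h / 2 * (ω + a)) * Real.sin (h / 2 * (ω - a)) : ℝ) : ℂ) := by
  have hcos := Real.cos_sub_cos (h * a) (h * ω)
  rw [show (h * a + h * ω) / 2 = h / 2 * (ω + a) by ring,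
    show (h * a - h * ω) / 2 = -(h / 2 * (ω - a)) by ring, Real.sin_neg] at hcos
  rw [symbLClosed, zero_add, cosh_mul_I, ← ofReal_cos]
  exact_mod_cast (by linear_combination (2 * h * ω * (Real.sin (h * ω))⁻¹) * hcos :
    h * ω * (Real.sin (h * ω))⁻¹ * (2 * Real.cos (h * a) - 2 * Real.cos (h * ω)) = _)

theorem deriv_symbLClosed_zero (h ω a : ℝ) :
    deriv (symbLClosed h ω a) 0 =
      2 * I * ((h * ω * (Real.sin (h * ω))⁻¹ * Real.sin (h * a) : ℝ) : ℂ) := by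
  rw [(hasDerivAt_symbLClosed h ω a 0).deriv, zero_add, sinh_mul_I]
  push_cast
  ring

theorem iteratedDeriv_two_symbLClosed_zero (h ω a : ℝ) :
    iteratedDeriv 2 (symbLClosed h ω a) 0 =
      ((2 * h * ω * (Real.sin (h * ω))⁻¹ * Real.cos (h * a) : ℝ) : ℂ) := by
  have hderiv : deriv (symbLClosed h ω a) = fun z =>
      ((h * ω * (Real.sin (h * ω))⁻¹ : ℝ) : ℂ) * (2 * sinh (z + (h * a : ℝ) * I)) :=
    funext fun z => (hasDerivAt_symbLClosed h ω a z).deriv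
  rw [iteratedDeriv_succ, iteratedDeriv_one, hderiv,
    ((((hasDerivAt_sinh _).comp_add_const 0 _).const_mul 2).const_mul _).deriv, zero_add,
    cosh_mul_I]
  push_cast
  ring

end

theorem symbL_taylor_symplectic_general
    (h ω a : ℝ) (hh : 0 < h) (hω : 0 < ω) (hsin : Real.sin (h * ω) ≠ 0)
    (c1 : ℝ) (b1f bb1f : ℝ → ℝ)
    -- symplecticity conditions with d₁ = 1
    (hsympl : ∀ x : ℝ, 0 ≤ x →
      Real.cos x * b1f x + x ^ 2 * sinc x * bb1f x = Real.cos (c1 * x) ∧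
      sinc x * b1f x - Real.cos x * bb1f x = c1 * sinc (c1 * x))
    (hb1 : b1f (h * ω) ≠ 0)
    -- the denominators of L₁ and L at z = 0 do not vanish
    (hden1 : ((bb1f (h * ω) / b1f (h * ω) : ℝ) : ℂ) *
        (Complex.exp (Complex.I * (h * a : ℝ)) - (Real.cos (h * ω) : ℂ))
        + ((sinc (h * ω) : ℝ) : ℂ) ≠ 0)
    (hden2 : ((bb1f (h * ω) : ℝ) : ℂ) *
        symbL2 h ω a c1 (b1f (h * ω)) (bb1f (h * ω)) 0 ≠ 0) :
    -- (i) for a = ±ω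
    ((a = ω ∨ a = -ω) →
      symbL h ω a c1 (b1f (h * ω)) (bb1f (h * ω)) 0 = 0) ∧
    (a = ω →
      deriv (symbL h ω a c1 (b1f (h * ω)) (bb1f (h * ω))) 0 = 2 * Complex.I * (h * ω : ℝ) ∧
      iteratedDeriv 2 (symbL h ω a c1 (b1f (h * ω)) (bb1f (h * ω))) 0 =
        ((2 * h * ω * (Real.cos (h * ω) / Real.sin (h * ω)) : ℝ) : ℂ)) ∧
    (a = -ω →
      deriv (symbL h ω a c1 (b1f (h * ω)) (bb1f (h * ω))) 0 = -(2 * Complex.I * (h * ω : ℝ)) ∧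
      iteratedDeriv 2 (symbL h ω a c1 (b1f (h * ω)) (bb1f (h * ω))) 0 =
        ((2 * h * ω * (Real.cos (h * ω) / Real.sin (h * ω)) : ℝ) : ℂ)) ∧
    -- (ii) for arbitrary real a
    (symbL h ω a c1 (b1f (h * ω)) (bb1f (h * ω)) 0 =
      ((4 * h * ω * (Real.sin (h * ω))⁻¹ *
        Real.sin (h / 2 * (ω + a)) * Real.sin (h / 2 * (ω - a)) : ℝ) : ℂ)) ∧
    (deriv (symbL h ω a c1 (b1f (h * ω)) (bb1f (h * ω))) 0 =
      2 * Complex.I * ((h * ω * (Real.sin (h * ω))⁻¹ * Real.sin (h * a) : ℝ) : ℂ)) := by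
  obtain ⟨hcos, hsinc⟩ := hsympl (h * ω) (mul_pos hh hω).le
  have hL := symbL_eventuallyEq_symbLClosed hsin hb1
    (Complex.ofReal_ne_zero.mp (left_ne_zero_of_mul hden2)) hcos hsinc hden1
  have hval := hL.eq_of_nhds.trans (symbLClosed_zero h ω a)
  have hder := hL.deriv_eq.trans (deriv_symbLClosed_zero h ω a)
  have hder2 := (hL.iteratedDeriv_eq 2).trans (iteratedDeriv_two_symbLClosed_zero h ω a)
  refine ⟨?_, fun ha => ⟨?_, ?_⟩, fun ha => ⟨?_, ?_⟩, hval, hder⟩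
  · rintro (rfl | rfl) <;> simp [hval]
  · rw [hder, ha, inv_mul_cancel_right₀ hsin]
  · rw [hder2, ha, div_eq_mul_inv]
    push_cast
    ring
  · rw [hder, ha, mul_neg, Real.sin_neg, mul_neg, inv_mul_cancel_right₀ hsin, Complex.ofReal_neg,
      mul_neg]
  · rw [hder2, ha, mul_neg, Real.cos_neg, div_eq_mul_inv]
    push_cast
    ring

/-- Taylor expansion at z = 0 of the scalar symbol L of the operator
L^k for ERKN coefficients satisfying the symplecticity conditions with d₁ = 1. -/
theorem symbL_taylor_symplectic
    (h ω a : ℝ) (hh : 0 < h) (hω : 0 < ω) (hsin : Real.sin (h * ω) ≠ 0)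
    (c1 : ℝ) (hc1 : c1 ∈ Set.Icc (0 : ℝ) 1) (b1f bb1f : ℝ → ℝ)
    -- symplecticity conditions with d₁ = 1
    (hsympl : ∀ x : ℝ, 0 ≤ x →
      Real.cos x * b1f x + x ^ 2 * sinc x * bb1f x = Real.cos (c1 * x) ∧
      sinc x * b1f x - Real.cos x * bb1f x = c1 * sinc (c1 * x))
    (hb1 : b1f (h * ω) ≠ 0)
    -- the denominators of L₁ and L at z = 0 do not vanish
    (hden1 : ((bb1f (h * ω) / b1f (h * ω) : ℝ) : ℂ) *
        (Complex.exp (Complex.I * (h * a : ℝ)) - (Real.cos (h * ω) : ℂ))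
        + ((sinc (h * ω) : ℝ) : ℂ) ≠ 0)
    (hden2 : ((bb1f (h * ω) : ℝ) : ℂ) *
        symbL2 h ω a c1 (b1f (h * ω)) (bb1f (h * ω)) 0 ≠ 0) :
    -- (i) for a = ±ω
    ((a = ω ∨ a = -ω) →
      symbL h ω a c1 (b1f (h * ω)) (bb1f (h * ω)) 0 = 0) ∧
    (a = ω →
      deriv (symbL h ω a c1 (b1f (h * ω)) (bb1f (h * ω))) 0 = 2 * Complex.I * (h * ω : ℝ) ∧
      iteratedDeriv 2 (symbL h ω a c1 (b1f (h * ω)) (bb1f (h * ω))) 0 =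
        ((2 * h * ω * (Real.cos (h * ω) / Real.sin (h * ω)) : ℝ) : ℂ)) ∧
    (a = -ω →
      deriv (symbL h ω a c1 (b1f (h * ω)) (bb1f (h * ω))) 0 = -(2 * Complex.I * (h * ω : ℝ)) ∧
      iteratedDeriv 2 (symbL h ω a c1 (b1f (h * ω)) (bb1f (h * ω))) 0 =
        ((2 * h * ω * (Real.cos (h * ω) / Real.sin (h * ω)) : ℝ) : ℂ)) ∧
    -- (ii) for arbitrary real a
    (symbL h ω a c1 (b1f (h * ω)) (bb1f (h * ω)) 0 =
      ((4 * h * ω * (Real.sin (h * ω))⁻¹ *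
        Real.sin (h / 2 * (ω + a)) * Real.sin (h / 2 * (ω - a)) : ℝ) : ℂ)) ∧
    (deriv (symbL h ω a c1 (b1f (h * ω)) (bb1f (h * ω))) 0 =
      2 * Complex.I * ((h * ω * (Real.sin (h * ω))⁻¹ * Real.sin (h * a) : ℝ) : ℂ)) :=
  symbL_taylor_symplectic_general h ω a hh hω hsin c1 b1f bb1f hsympl hb1 hden1 hden2
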